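/- Urn coupling marginals: under the urn coupling described in the context, the marginal law of b̂ is the weight-proportional law on Û, i.e. P(b̂ = x) = w(x)/‖Û‖ for every x ∈ Û. -/

import Mathlib

open Finset

/-- The joint law of the pair of balls `(b, b̂)` produced by the urn coupling:
`b` is drawn from the urn `U` proportionally to its weight; if `b ∈ C = U ∩ Û`, then with
probability `‖U‖/‖Û‖` one sets `b̂ = b` and otherwise `b̂` is drawn from `L = Û \ U`
proportionally to its weight; if `b ∈ U \ Û`, then `b̂` is drawn from `L` proportionally to
its weight. `jointUrnLaw w U Uh x y` is the probability of the outcome `(b, b̂) = (x, y)`. -/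
noncomputable def jointUrnLaw {α : Type*} [DecidableEq α] (w : α → ℝ) (U Uh : Finset α)
    (x y : α) : ℝ :=
  (if x ∈ U then w x / ∑ b ∈ U, w b else 0) *
    (if x ∈ U ∩ Uh then
        (if y = x then (∑ b ∈ U, w b) / ∑ b ∈ Uh, w b else 0)
          + (1 - (∑ b ∈ U, w b) / ∑ b ∈ Uh, w b)
            * (if y ∈ Uh \ U then w y / ∑ b ∈ Uh \ U, w b else 0)
      else (if y ∈ Uh \ U then w y / ∑ b ∈ Uh \ U, w b else 0))

/-! The marginal of `b̂` splits into the event that `b̂ = b` is kept, which has mass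
`(w y / ‖U‖) (‖U‖ / ‖Û‖) = w y / ‖Û‖` at `y ∈ C`, and the event that `b̂` is redrawn from `L`.
The latter has total probability `1 - ‖C‖/‖Û‖ = ‖L‖/‖Û‖`, so it puts mass
`(‖L‖/‖Û‖) (w y / ‖L‖) = w y / ‖Û‖` at `y ∈ L`. -/

namespace UrnCoupling

variable {α : Type*} [DecidableEq α] (w : α → ℝ) (U Uh : Finset α)

/-- The probability that `b = x` and `b̂` is then redrawn from `Û \ U`. -/
noncomputable def redrawWeight (x : α) : ℝ :=
  if x ∈ U then
    (w x / ∑ b ∈ U, w b) * (if x ∈ Uh then 1 - (∑ b ∈ U, w b) / ∑ b ∈ Uh, w b else 1)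
  else 0

theorem jointUrnLaw_eq_keep_add_redraw (x y : α) :
    jointUrnLaw w U Uh x y =
      (if y = x then
        (if x ∈ U ∩ Uh then w x / (∑ b ∈ U, w b) * ((∑ b ∈ U, w b) / ∑ b ∈ Uh, w b) else 0)
        else 0) +
      redrawWeight w U Uh x * (if y ∈ Uh \ U then w y / ∑ b ∈ Uh \ U, w b else 0) := by
  unfold jointUrnLaw redrawWeight
  split_ifs <;> simp_all [mul_assoc]

variable {w U Uh}

theorem redrawWeight_eq_sub (hS : ∑ b ∈ U, w b ≠ 0) (x : α) :
    redrawWeight w U Uh x =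
      (if x ∈ U then w x / ∑ b ∈ U, w b else 0) -
        (if x ∈ U ∩ Uh then w x / ∑ b ∈ Uh, w b else 0) := by
  unfold redrawWeight
  split_ifs <;> simp_all [mul_sub, div_mul_div_cancel₀ hS]

theorem sum_redrawWeight [Fintype α] (hS : ∑ b ∈ U, w b ≠ 0) (hT : ∑ b ∈ Uh, w b ≠ 0) :
    ∑ x, redrawWeight w U Uh x = (∑ b ∈ Uh \ U, w b) / ∑ b ∈ Uh, w b := by
  have hsplit : ∑ b ∈ Uh, w b = ∑ b ∈ U ∩ Uh, w b + ∑ b ∈ Uh \ U, w b := by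
    rw [inter_comm, sum_inter_add_sum_sdiff]
  simp only [redrawWeight_eq_sub hS, sum_sub_distrib, sum_ite_mem, univ_inter, ← sum_div,
    div_self hS]
  rw [eq_div_iff hT, sub_mul, div_mul_cancel₀ _ hT, hsplit]
  ring

end UrnCoupling

open UrnCoupling in
theorem jointUrnLaw_snd_marginal_general {α : Type*} [Fintype α] [DecidableEq α]
    (w : α → ℝ) (hw : ∀ b, 0 < w b)
    (U Uh : Finset α) (hU : U.Nonempty) (hL : (Uh \ U).Nonempty) :
    ∀ y ∈ Uh, ∑ x : α, jointUrnLaw w U Uh x y = w y / ∑ b ∈ Uh, w b := by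
  intro y hy
  have hS : 0 < ∑ b ∈ U, w b := sum_pos (fun b _ => hw b) hU
  have hΛ : 0 < ∑ b ∈ Uh \ U, w b := sum_pos (fun b _ => hw b) hL
  have hT : 0 < ∑ b ∈ Uh, w b :=
    sum_pos (fun b _ => hw b) (hL.mono sdiff_subset)
  simp only [jointUrnLaw_eq_keep_add_redraw, sum_add_distrib, ← sum_mul,
    sum_redrawWeight hS.ne' hT.ne', sum_ite_eq, mem_univ, if_true]
  by_cases hyU : y ∈ U
  · have hyL : y ∉ Uh \ U := fun h => (mem_sdiff.1 h).2 hyU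
    simp only [mem_inter, hyU, hy, and_self, if_true, hyL, if_false, mul_zero, add_zero]
    exact div_mul_div_cancel₀ hS.ne'
  · have hyL : y ∈ Uh \ U := mem_sdiff.2 ⟨hy, hyU⟩
    simp only [mem_inter, hyU, false_and, if_false, hyL, if_true, zero_add]
    exact div_mul_div_cancel₀' hΛ.ne' _ _

/-- urn coupling marginals, equation (eq:check:marg2).  Under the urn
coupling, the marginal law of `b̂` is the weight-proportional law on `Û`:
`P(b̂ = x) = w(x)/‖Û‖` for every `x ∈ Û`. -/
theorem jointUrnLaw_snd_marginal {α : Type*} [Fintype α] [DecidableEq α]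
    (w : α → ℝ) (hw : ∀ b, 0 < w b)
    (U Uh : Finset α) (hU : U.Nonempty) (hUh : Uh.Nonempty)
    (hle : ∑ b ∈ U, w b ≤ ∑ b ∈ Uh, w b) (hL : (Uh \ U).Nonempty) :
    ∀ y ∈ Uh, ∑ x : α, jointUrnLaw w U Uh x y = w y / ∑ b ∈ Uh, w b :=
  jointUrnLaw_snd_marginal_general w hw U Uh hU hL
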